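/- arXiv:1803.02716 — 4 statements merged into one kernel-verified Lean document; each statement's English description precedes it below -/
import Mathlib

section
/- For 0 < α < θ < 1 there exists C = C(n) such that every C^{1,θ} function f : ℝⁿ → ℝ satisfies ‖∇f‖_{C^{0,α}(ℝⁿ)} ≤ C ‖f‖_{C^{0,θ}(ℝⁿ)}^{θ-α} ‖∇f‖_{C^{0,θ}(ℝⁿ)}^{1+α-θ}. -/
/-!
Two elementary estimates, both on a scale `ρ > 0`. A first-order Taylor expansion along a step of
length `ρ` bounds `‖∇f‖` by `Kf ρ^(θ-1) + Kg ρ^θ` (Landau's inequality in Hölder form); and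
splitting `‖x - y‖ ≤ ρ` from `‖x - y‖ > ρ` bounds the `α`-Hölder constant of `∇f` by
`Kg ρ^(θ-α) + 2 S ρ^(-α)`, with `S` any bound on `‖∇f‖`. At the natural scale
`ρ = ‖f‖_{C^{0,θ}} / ‖∇f‖_{C^{0,θ}}` every term is at most a multiple of
`‖∇f‖_{C^{0,θ}} ρ^(θ-α)`, which is the claimed product of powers.
-/

open Real

lemma holder_const_nonneg {E F : Type*} [NormedAddCommGroup E] [Nontrivial E]
    [SeminormedAddCommGroup F] {g : E → F} {K θ : ℝ}
    (hg : ∀ x y, ‖g x - g y‖ ≤ K * ‖x - y‖ ^ θ) : 0 ≤ K := by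
  obtain ⟨x, hx⟩ := exists_ne (0 : E)
  have hpos : 0 < ‖x - 0‖ ^ θ := rpow_pos_of_pos (by simpa using hx) θ
  exact nonneg_of_mul_nonneg_left ((norm_nonneg _).trans (hg x 0)) hpos

lemma norm_sub_le_of_holder_of_bounded {E F : Type*} [SeminormedAddCommGroup E]
    [SeminormedAddCommGroup F] {g : E → F} {α θ K S ρ : ℝ}
    (hα : 0 < α) (hαθ : α ≤ θ) (hK : 0 ≤ K) (hρ : 0 < ρ) (hS : ∀ x, ‖g x‖ ≤ S)
    (hg : ∀ x y, ‖g x - g y‖ ≤ K * ‖x - y‖ ^ θ) (x y : E) :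
    ‖g x - g y‖ ≤ (K * ρ ^ (θ - α) + 2 * S * ρ ^ (-α)) * ‖x - y‖ ^ α := by
  have hS0 : 0 ≤ S := (norm_nonneg _).trans (hS x)
  rcases le_or_gt ‖x - y‖ ρ with hnear | hfar
  · have hsplit : ‖x - y‖ ^ θ = ‖x - y‖ ^ (θ - α) * ‖x - y‖ ^ α := by
      rw [← rpow_add' (norm_nonneg _) (by linarith), sub_add_cancel]
    calc ‖g x - g y‖ ≤ K * (‖x - y‖ ^ (θ - α) * ‖x - y‖ ^ α) := hsplit ▸ hg x y
      _ ≤ K * (ρ ^ (θ - α) * ‖x - y‖ ^ α) := by gcongr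
      _ ≤ (K * ρ ^ (θ - α) + 2 * S * ρ ^ (-α)) * ‖x - y‖ ^ α := by
        rw [← mul_assoc]; gcongr; exact le_add_of_nonneg_right (by positivity)
  · have hscale : 1 ≤ ρ ^ (-α) * ‖x - y‖ ^ α := by
      rw [rpow_neg hρ.le, inv_mul_eq_div, one_le_div (by positivity)]
      gcongr
    calc ‖g x - g y‖ ≤ ‖g x‖ + ‖g y‖ := norm_sub_le _ _
      _ ≤ 2 * S * (ρ ^ (-α) * ‖x - y‖ ^ α) := by nlinarith [hS x, hS y]
      _ ≤ (K * ρ ^ (θ - α) + 2 * S * ρ ^ (-α)) * ‖x - y‖ ^ α := by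
        rw [add_mul, ← mul_assoc]
        exact le_add_of_nonneg_left (by positivity)

lemma mul_div_rpow_eq {A B γ : ℝ} (hA : 0 ≤ A) (hB : 0 < B) :
    B * (A / B) ^ γ = A ^ γ * B ^ (1 - γ) := by
  rw [div_rpow hA hB.le, rpow_sub hB, rpow_one]
  field_simp

section Holder

variable {E F : Type*} [NormedAddCommGroup E] [NormedSpace ℝ E]
  [NormedAddCommGroup F] [NormedSpace ℝ F] {f : E → F}

lemma norm_sub_sub_fderiv_le_of_holder (hf : Differentiable ℝ f) {θ K : ℝ}
    (hθ : 0 ≤ θ) (hK : 0 ≤ K)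
    (hfd : ∀ x y, ‖fderiv ℝ f x - fderiv ℝ f y‖ ≤ K * ‖x - y‖ ^ θ) (x y : E) :
    ‖f y - f x - fderiv ℝ f x (y - x)‖ ≤ K * ‖y - x‖ ^ θ * ‖y - x‖ := by
  refine (convex_closedBall x ‖y - x‖).norm_image_sub_le_of_norm_fderiv_le' (fun z _ => hf z)
    (fun z hz => ?_) (Metric.mem_closedBall_self (norm_nonneg _))
    (by rw [Metric.mem_closedBall, dist_eq_norm])
  rw [Metric.mem_closedBall, dist_eq_norm] at hz
  exact (hfd z x).trans (by gcongr)

lemma norm_fderiv_apply_le_of_holder (hf : Differentiable ℝ f) {θ Kf Kg : ℝ}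
    (hθ : 0 ≤ θ) (hKg : 0 ≤ Kg) (hf_holder : ∀ x y, ‖f x - f y‖ ≤ Kf * ‖x - y‖ ^ θ)
    (hfd : ∀ x y, ‖fderiv ℝ f x - fderiv ℝ f y‖ ≤ Kg * ‖x - y‖ ^ θ) (x h : E) :
    ‖fderiv ℝ f x h‖ ≤ Kf * ‖h‖ ^ θ + Kg * ‖h‖ ^ θ * ‖h‖ := by
  have increment := hf_holder (x + h) x
  have taylor := norm_sub_sub_fderiv_le_of_holder hf hθ hKg hfd x (x + h)
  rw [add_sub_cancel_left] at increment taylor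
  calc ‖fderiv ℝ f x h‖ = ‖(f (x + h) - f x) - (f (x + h) - f x - fderiv ℝ f x h)‖ := by
        rw [sub_sub_cancel]
    _ ≤ ‖f (x + h) - f x‖ + ‖f (x + h) - f x - fderiv ℝ f x h‖ := norm_sub_le _ _
    _ ≤ Kf * ‖h‖ ^ θ + Kg * ‖h‖ ^ θ * ‖h‖ := add_le_add increment taylor

lemma norm_fderiv_le_of_holder (hf : Differentiable ℝ f) {θ Kf Kg ρ : ℝ}
    (hθ : 0 ≤ θ) (hKf : 0 ≤ Kf) (hKg : 0 ≤ Kg) (hρ : 0 < ρ)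
    (hf_holder : ∀ x y, ‖f x - f y‖ ≤ Kf * ‖x - y‖ ^ θ)
    (hfd : ∀ x y, ‖fderiv ℝ f x - fderiv ℝ f y‖ ≤ Kg * ‖x - y‖ ^ θ) (x : E) :
    ‖fderiv ℝ f x‖ ≤ Kf * ρ ^ (θ - 1) + Kg * ρ ^ θ := by
  refine ContinuousLinearMap.opNorm_le_of_unit_norm (by positivity) fun v hv => ?_
  have key := norm_fderiv_apply_le_of_holder hf hθ hKg hf_holder hfd x (ρ • v)
  rw [map_smul, norm_smul, norm_smul, hv, mul_one, norm_of_nonneg hρ.le] at key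
  calc ‖fderiv ℝ f x v‖ ≤ (Kf * ρ ^ θ + Kg * ρ ^ θ * ρ) / ρ := by
        rw [le_div_iff₀ hρ]; linarith
    _ = Kf * ρ ^ (θ - 1) + Kg * ρ ^ θ := by
        rw [rpow_sub_one hρ.ne']; field_simp

theorem exists_holder_bounds_fderiv_of_pos (hf : Differentiable ℝ f)
    {α θ A B Kf Mg Kg : ℝ} (hα : 0 < α) (hαθ : α < θ) (hA : 0 < A) (hB : 0 < B)
    (hKf0 : 0 ≤ Kf) (hKfA : Kf ≤ A) (hMgB : Mg ≤ B) (hKg0 : 0 ≤ Kg) (hKgB : Kg ≤ B)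
    (hf_holder : ∀ x y, ‖f x - f y‖ ≤ Kf * ‖x - y‖ ^ θ) (hMg : ∀ x, ‖fderiv ℝ f x‖ ≤ Mg)
    (hfd : ∀ x y, ‖fderiv ℝ f x - fderiv ℝ f y‖ ≤ Kg * ‖x - y‖ ^ θ) :
    ∃ S T : ℝ, (∀ x, ‖fderiv ℝ f x‖ ≤ S) ∧
      (∀ x y, ‖fderiv ℝ f x - fderiv ℝ f y‖ ≤ T * ‖x - y‖ ^ α) ∧
      S + T ≤ 7 * A ^ (θ - α) * B ^ (1 + α - θ) := by
  set ρ := A / B with hρ_def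
  have hρ : 0 < ρ := div_pos hA hB
  -- Landau's bound is the sharper one for `ρ ≤ 1`, the trivial bound `Mg` for `ρ ≥ 1`.
  set S := min Mg (Kf * ρ ^ (θ - 1) + Kg * ρ ^ θ)
  have hS : ∀ x, ‖fderiv ℝ f x‖ ≤ S := fun x =>
    le_min (hMg x) (norm_fderiv_le_of_holder hf (by linarith) hKf0 hKg0 hρ hf_holder hfd x)
  refine ⟨S, Kg * ρ ^ (θ - α) + 2 * S * ρ ^ (-α), hS,
    norm_sub_le_of_holder_of_bounded hα hαθ.le hKg0 hρ hS hfd, ?_⟩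
  have hS_landau : S ≤ 2 * (B * ρ ^ θ) := by
    have hAρ : A * ρ ^ (θ - 1) = B * ρ ^ θ := by
      rw [rpow_sub_one hρ.ne', hρ_def]; field_simp
    have : Kf * ρ ^ (θ - 1) ≤ A * ρ ^ (θ - 1) := by gcongr
    have : Kg * ρ ^ θ ≤ B * ρ ^ θ := by gcongr
    exact (min_le_right _ _).trans (by linarith)
  have hS_le : S ≤ 2 * (B * ρ ^ (θ - α)) := by
    rcases le_total ρ 1 with hρ1 | hρ1
    · have : ρ ^ θ ≤ ρ ^ (θ - α) := rpow_le_rpow_of_exponent_ge hρ hρ1 (by linarith)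
      exact hS_landau.trans (by gcongr)
    · have : 1 ≤ ρ ^ (θ - α) := one_le_rpow hρ1 (by linarith)
      have : B ≤ B * ρ ^ (θ - α) := le_mul_of_one_le_right hB.le this
      exact (min_le_left _ _).trans (by linarith)
  have hSρ : S * ρ ^ (-α) ≤ 2 * (B * ρ ^ (θ - α)) :=
    calc S * ρ ^ (-α) ≤ 2 * (B * ρ ^ θ) * ρ ^ (-α) := by gcongr
      _ = 2 * (B * ρ ^ (θ - α)) := by rw [sub_eq_add_neg, rpow_add hρ]; ring
  have hKgρ : Kg * ρ ^ (θ - α) ≤ B * ρ ^ (θ - α) := by gcongr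
  calc S + (Kg * ρ ^ (θ - α) + 2 * S * ρ ^ (-α)) ≤ 7 * (B * ρ ^ (θ - α)) := by linarith
    _ = 7 * A ^ (θ - α) * B ^ (1 + α - θ) := by
      rw [hρ_def, mul_div_rpow_eq hA.le hB, show 1 + α - θ = 1 - (θ - α) by ring, mul_assoc]

theorem exists_holder_bounds_fderiv (hf : Differentiable ℝ f) {α θ Mf Kf Mg Kg : ℝ}
    (hα : 0 < α) (hαθ : α < θ) (hMf : ∀ x, ‖f x‖ ≤ Mf)
    (hf_holder : ∀ x y, ‖f x - f y‖ ≤ Kf * ‖x - y‖ ^ θ) (hMg : ∀ x, ‖fderiv ℝ f x‖ ≤ Mg)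
    (hfd : ∀ x y, ‖fderiv ℝ f x - fderiv ℝ f y‖ ≤ Kg * ‖x - y‖ ^ θ) :
    ∃ S T : ℝ, (∀ x, ‖fderiv ℝ f x‖ ≤ S) ∧
      (∀ x y, ‖fderiv ℝ f x - fderiv ℝ f y‖ ≤ T * ‖x - y‖ ^ α) ∧
      S + T ≤ 7 * (Mf + Kf) ^ (θ - α) * (Mg + Kg) ^ (1 + α - θ) := by
  rcases subsingleton_or_nontrivial E with hE | hE
  · refine ⟨Mg, 7 * (Mf + Kf) ^ (θ - α) * (Mg + Kg) ^ (1 + α - θ) - Mg, hMg,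
      fun x y => ?_, by linarith⟩
    simp [Subsingleton.elim x y, zero_rpow hα.ne']
  have hMf0 : 0 ≤ Mf := (norm_nonneg _).trans (hMf 0)
  have hMg0 : 0 ≤ Mg := (norm_nonneg _).trans (hMg 0)
  have hKf0 : 0 ≤ Kf := holder_const_nonneg hf_holder
  have hKg0 : 0 ≤ Kg := holder_const_nonneg hfd
  by_cases hflat : ∀ x, fderiv ℝ f x = 0
  · refine ⟨0, 0, by simp [hflat], by simp [hflat], ?_⟩
    rw [add_zero]
    exact mul_nonneg (mul_nonneg (by norm_num) (rpow_nonneg (add_nonneg hMf0 hKf0) _))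
      (rpow_nonneg (add_nonneg hMg0 hKg0) _)
  obtain ⟨x₀, hx₀⟩ := not_forall.mp hflat
  have hB : 0 < Mg + Kg := by
    linarith [norm_pos_iff.mpr hx₀, hMg x₀]
  have hA : 0 < Mf + Kf := by
    refine (add_nonneg hMf0 hKf0).lt_of_ne fun hA => hx₀ ?_
    have hf0 : f = 0 := funext fun x => norm_le_zero_iff.mp ((hMf x).trans (by linarith))
    rw [hf0, fderiv_zero, Pi.zero_apply]
  exact exists_holder_bounds_fderiv_of_pos hf hα hαθ hA hB hKf0 (by linarith) (by linarith)
    hKg0 (by linarith) hf_holder hMg hfd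

end Holder

theorem holder_interpolation_full_general
    (n : ℕ) (α θ : ℝ) (hα : 0 < α) (hαθ : α < θ) :
    ∃ C > (0 : ℝ), ∀ f : EuclideanSpace ℝ (Fin n) → ℝ, Differentiable ℝ f →
      ∀ Mf Kf Mg Kg : ℝ,
        (∀ x, |f x| ≤ Mf) →
        (∀ x y, |f x - f y| ≤ Kf * ‖x - y‖ ^ θ) →
        (∀ x, ‖fderiv ℝ f x‖ ≤ Mg) →
        (∀ x y, ‖fderiv ℝ f x - fderiv ℝ f y‖ ≤ Kg * ‖x - y‖ ^ θ) →
        ∃ S T : ℝ,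
          (∀ x, ‖fderiv ℝ f x‖ ≤ S) ∧
          (∀ x y, ‖fderiv ℝ f x - fderiv ℝ f y‖ ≤ T * ‖x - y‖ ^ α) ∧
          S + T ≤ C * (Mf + Kf) ^ (θ - α) * (Mg + Kg) ^ (1 + α - θ) :=
  ⟨7, by norm_num, fun _ hf _ _ _ _ hMf hf_holder hMg hfd =>
    exists_holder_bounds_fderiv hf hα hαθ hMf hf_holder hMg hfd⟩

/-- Full Hölder-norm interpolation: for `0 < α < θ < 1` there is `C = C(n)` such that every
differentiable `f : ℝⁿ → ℝ` with `‖f‖_{C^{0,θ}} ≤ Mf + Kf` and `‖∇f‖_{C^{0,θ}} ≤ Mg + Kg`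
(sup-norm bounds `Mf, Mg`; θ-Hölder seminorm bounds `Kf, Kg`) satisfies
`‖∇f‖_{C^{0,α}} ≤ C ‖f‖_{C^{0,θ}}^{θ-α} ‖∇f‖_{C^{0,θ}}^{1+α-θ}`, expressed by exhibiting a
sup-norm part `S` and an α-seminorm part `T` of `∇f` with `S + T` bounded accordingly. -/
theorem holder_interpolation_full
    (n : ℕ) (α θ : ℝ) (hα : 0 < α) (hαθ : α < θ) (hθ : θ < 1) :
    ∃ C > (0 : ℝ), ∀ f : EuclideanSpace ℝ (Fin n) → ℝ, Differentiable ℝ f →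
      ∀ Mf Kf Mg Kg : ℝ,
        (∀ x, |f x| ≤ Mf) →
        (∀ x y, |f x - f y| ≤ Kf * ‖x - y‖ ^ θ) →
        (∀ x, ‖fderiv ℝ f x‖ ≤ Mg) →
        (∀ x y, ‖fderiv ℝ f x - fderiv ℝ f y‖ ≤ Kg * ‖x - y‖ ^ θ) →
        ∃ S T : ℝ,
          (∀ x, ‖fderiv ℝ f x‖ ≤ S) ∧
          (∀ x y, ‖fderiv ℝ f x - fderiv ℝ f y‖ ≤ T * ‖x - y‖ ^ α) ∧
          S + T ≤ C * (Mf + Kf) ^ (θ - α) * (Mg + Kg) ^ (1 + α - θ) :=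
  holder_interpolation_full_general n α θ hα hαθ
end

section
/- Let H(t) = tanh(t/√2) and W(t) = (1-t²)²/4, so W''(s) = 3s² - 1 and W''(±1) = 2. With A₀ = 2, the improper integral ∫_{-∞}^{∞} (W''(H(t)) - 2) · e^{√2 t} · H'(t) dt converges and equals -4 A₀. -/
open Real MeasureTheory

open Filter Set

noncomputable section

local notation "ss" => Real.sqrt 2

private lemma hs2 : ss ^ 2 = 2 := Real.sq_sqrt (by norm_num)
private lemma hs0 : 0 < ss := Real.sqrt_pos.2 (by norm_num)
private lemma hs1 : 1 ≤ ss := by nlinarith [hs2, hs0]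

private lemma tanh_formula (t : ℝ) :
    Real.tanh (t / ss) = (Real.exp (ss * t) - 1) / (Real.exp (ss * t) + 1) := by
  rw [Real.tanh_eq_sinh_div_cosh, Real.sinh_eq, Real.cosh_eq]
  have hst : Real.exp (ss * t) = Real.exp (t / ss) * Real.exp (t / ss) := by
    rw [← Real.exp_add]
    congr 1
    rw [← add_div, eq_div_iff hs0.ne']
    linear_combination t * hs2
  have key : Real.exp (t / ss) * Real.exp (-t / ss) = 1 := by
    rw [← Real.exp_add, neg_div]; simp
  have e1 := Real.exp_pos (t / ss)
  have e2 := Real.exp_pos (-(t / ss))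
  have d1 : Real.exp (t / ss) + Real.exp (-(t / ss)) ≠ 0 := by positivity
  have d2 : Real.exp (t / ss) * Real.exp (t / ss) + 1 ≠ 0 := by positivity
  rw [hst]
  field_simp
  rw [neg_div] at key
  linear_combination (-2 * Real.exp (t / ss)) * key

private def gg (t : ℝ) : ℝ :=
  24 * (Real.exp (ss * t) + 1)⁻¹ - 24 * ((Real.exp (ss * t) + 1) ^ 2)⁻¹
    + 8 * ((Real.exp (ss * t) + 1) ^ 3)⁻¹

private def FF (t : ℝ) : ℝ :=
  -(24 * ss * Real.exp (ss * t) ^ 3 / (Real.exp (ss * t) + 1) ^ 4)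

private lemma hden (t : ℝ) : Real.exp (ss * t) + 1 ≠ 0 := by positivity

private lemma hexp_deriv (t : ℝ) :
    HasDerivAt (fun u : ℝ => Real.exp (ss * u) + 1) (ss * Real.exp (ss * t)) t := by
  have h : HasDerivAt (fun u : ℝ => ss * u) ss t := by
    simpa using (hasDerivAt_id t).const_mul ss
  simpa [mul_comm] using h.exp.add_const 1

private lemma hgg_deriv (t : ℝ) : HasDerivAt gg (FF t) t := by
  have hd := hexp_deriv t
  have h1 := (hd.inv (hden t)).const_mul (24 : ℝ)
  have h2 := ((hd.pow 2).inv (pow_ne_zero 2 (hden t))).const_mul (24 : ℝ)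
  have h3 := ((hd.pow 3).inv (pow_ne_zero 3 (hden t))).const_mul (8 : ℝ)
  have h := (h1.sub h2).add h3
  refine h.congr_deriv ?_
  have hne : Real.exp (ss * t) + 1 ≠ 0 := hden t
  simp only [Pi.pow_apply]
  unfold FF
  field_simp
  ring

private lemma hFF_nonpos (t : ℝ) : FF t ≤ 0 := by
  rw [FF]
  have : (0:ℝ) ≤ 24 * ss * Real.exp (ss * t) ^ 3 / (Real.exp (ss * t) + 1) ^ 4 := by
    positivity
  linarith

private lemma hgg_top : Tendsto gg atTop (nhds 0) := by
  have hx : Tendsto (fun t : ℝ => Real.exp (ss * t) + 1) atTop atTop := by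
    refine tendsto_atTop_add_const_right _ 1 (Real.tendsto_exp_atTop.comp ?_)
    exact Tendsto.const_mul_atTop hs0 tendsto_id
  have hinv : Tendsto (fun t : ℝ => (Real.exp (ss * t) + 1)⁻¹) atTop (nhds 0) :=
    tendsto_inv_atTop_zero.comp hx
  have h : Tendsto gg atTop (nhds (24 * 0 - 24 * 0 ^ 2 + 8 * 0 ^ 3)) := by
    unfold gg
    simp only [← inv_pow]
    exact ((hinv.const_mul 24).sub ((hinv.pow 2).const_mul 24)).add
      ((hinv.pow 3).const_mul 8)
  simpa using h

private lemma hgg_bot : Tendsto gg atBot (nhds 8) := by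
  have hx : Tendsto (fun t : ℝ => Real.exp (ss * t)) atBot (nhds 0) := by
    refine Real.tendsto_exp_atBot.comp ?_
    exact Tendsto.const_mul_atBot hs0 tendsto_id
  have hx1 : Tendsto (fun t : ℝ => Real.exp (ss * t) + 1) atBot (nhds 1) := by
    simpa using hx.add_const 1
  have hinv : Tendsto (fun t : ℝ => (Real.exp (ss * t) + 1)⁻¹) atBot (nhds 1) := by
    simpa using hx1.inv₀ (by norm_num)
  have h : Tendsto gg atBot (nhds (24 * 1 - 24 * 1 ^ 2 + 8 * 1 ^ 3)) := by
    unfold gg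
    simp only [← inv_pow]
    exact ((hinv.const_mul 24).sub ((hinv.pow 2).const_mul 24)).add
      ((hinv.pow 3).const_mul 8)
  norm_num at h
  exact h

private lemma hFF_cont : Continuous FF := by
  unfold FF
  fun_prop (disch := intro t; positivity)

private lemma hFF_int_Iic : IntegrableOn FF (Iic 0) := by
  refine Integrable.mono ((integrableOn_exp_Iic 0).const_mul (24 * ss))
    hFF_cont.aestronglyMeasurable.restrict ?_
  filter_upwards [MeasureTheory.ae_restrict_mem measurableSet_Iic] with t ht
  have ht0 : t ≤ 0 := ht
  have hx0 : (0:ℝ) < Real.exp (ss * t) := Real.exp_pos _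
  have hx1 : Real.exp (ss * t) ≤ 1 := by
    apply Real.exp_le_one_iff.2
    exact mul_nonpos_of_nonneg_of_nonpos hs0.le ht0
  have hst : Real.exp (ss * t) ≤ Real.exp t := by
    apply Real.exp_le_exp.2
    nlinarith [mul_nonneg (sub_nonneg.2 hs1) (neg_nonneg.2 ht0)]
  have hden4 : (1:ℝ) ≤ (Real.exp (ss * t) + 1) ^ 4 := by
    calc (1:ℝ) = 1 ^ 4 := by norm_num
      _ ≤ (Real.exp (ss * t) + 1) ^ 4 := by gcongr; linarith
  have hx3 : Real.exp (ss * t) ^ 3 ≤ Real.exp (ss * t) := by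
    nlinarith [mul_nonneg hx0.le (sub_nonneg.2 hx1),
      mul_nonneg (mul_nonneg hx0.le hx0.le) (sub_nonneg.2 hx1)]
  have hb : |FF t| ≤ 24 * ss * Real.exp t := by
    rw [FF, abs_neg, abs_of_nonneg (by positivity)]
    calc 24 * ss * Real.exp (ss * t) ^ 3 / (Real.exp (ss * t) + 1) ^ 4
        ≤ 24 * ss * Real.exp (ss * t) ^ 3 := div_le_self (by positivity) hden4
      _ ≤ 24 * ss * Real.exp (ss * t) := by
          have h24 : (0:ℝ) ≤ 24 * ss := by positivity
          exact mul_le_mul_of_nonneg_left hx3 h24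
      _ ≤ 24 * ss * Real.exp t := by
          have h24 : (0:ℝ) ≤ 24 * ss := by positivity
          exact mul_le_mul_of_nonneg_left hst h24
  calc ‖FF t‖ ≤ 24 * ss * Real.exp t := by rwa [Real.norm_eq_abs]
    _ ≤ ‖24 * ss * Real.exp t‖ := le_abs_self _

private lemma hFF_int_Ioi : IntegrableOn FF (Ioi 0) :=
  integrableOn_Ioi_deriv_of_nonpos' (fun x _ => hgg_deriv x)
    (fun x _ => hFF_nonpos x) hgg_top

private lemma hFF_int : Integrable FF := by
  rw [← integrableOn_univ, ← Set.Iic_union_Ioi (a := (0:ℝ))]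
  exact hFF_int_Iic.union hFF_int_Ioi

private lemma hFF_integral : ∫ t : ℝ, FF t = -8 := by
  rw [← intervalIntegral.integral_Iic_add_Ioi hFF_int_Iic hFF_int_Ioi]
  have h1 : ∫ t in Iic (0:ℝ), FF t = gg 0 - 8 :=
    integral_Iic_of_hasDerivAt_of_tendsto' (fun x _ => hgg_deriv x) hFF_int_Iic hgg_bot
  have h2 : ∫ t in Ioi (0:ℝ), FF t = 0 - gg 0 :=
    integral_Ioi_of_hasDerivAt_of_tendsto' (fun x _ => hgg_deriv x) hFF_int_Ioi hgg_top
  rw [h1, h2]; ring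

/-- For `H(t) = tanh(t/√2)`, `W''(s) = 3s² - 1` (so `W''(±1) = 2`), and `A₀ = 2`, the
improper integral `∫ (W''(H(t)) - 2) e^{√2 t} H'(t) dt` converges and equals `-4A₀`. -/
theorem weighted_interaction_integral
    (H : ℝ → ℝ) (hH : H = fun t => Real.tanh (t / Real.sqrt 2)) :
    ∃ A₀ : ℝ, A₀ = 2 ∧
    Integrable (fun t : ℝ =>
      ((3 * (H t) ^ 2 - 1) - 2) * Real.exp (Real.sqrt 2 * t) * deriv H t) ∧
    (∫ t : ℝ, ((3 * (H t) ^ 2 - 1) - 2) * Real.exp (Real.sqrt 2 * t) * deriv H t)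
      = -4 * A₀ := by
  have hHt : ∀ t, H t = (Real.exp (ss * t) - 1) / (Real.exp (ss * t) + 1) := by
    intro t; rw [hH]; exact tanh_formula t
  have hH' : ∀ t, HasDerivAt H
      (2 * ss * Real.exp (ss * t) / (Real.exp (ss * t) + 1) ^ 2) t := by
    intro t
    have hd := hexp_deriv t
    have hbase : HasDerivAt (fun u : ℝ => Real.exp (ss * u))
        (ss * Real.exp (ss * t)) t := by
      have h : HasDerivAt (fun u : ℝ => ss * u) ss t := by
        simpa using (hasDerivAt_id t).const_mul ss
      simpa [mul_comm] using h.exp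
    have hnum : HasDerivAt (fun u : ℝ => Real.exp (ss * u) - 1)
        (ss * Real.exp (ss * t)) t := hbase.sub_const 1
    have hq := hnum.div hd (hden t)
    have hfun : H = fun u => (Real.exp (ss * u) - 1) / (Real.exp (ss * u) + 1) :=
      funext hHt
    rw [hfun]
    refine hq.congr_deriv ?_
    have hne := hden t
    field_simp
    ring
  have hderiv : ∀ t, deriv H t
      = 2 * ss * Real.exp (ss * t) / (Real.exp (ss * t) + 1) ^ 2 :=
    fun t => (hH' t).deriv
  have heq : (fun t : ℝ =>
      ((3 * (H t) ^ 2 - 1) - 2) * Real.exp (Real.sqrt 2 * t) * deriv H t) = FF := by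
    funext t
    rw [hderiv t, hHt t, FF]
    have hne := hden t
    field_simp
    ring
  refine ⟨2, rfl, ?_, ?_⟩
  · rw [heq]; exact hFF_int
  · rw [heq, hFF_integral]; norm_num

end
end

section
/- Interaction estimate for translated heteroclinics: let H(t)=tanh(t/√2), W(t)=(1-t²)²/4, and A₀=2. For every κ ∈ (0,1) there exists C > 0 such that for all T ≥ 1: |∫_{-∞}^{∞} (W''(H(t)) - 2) H'(t-T) H'(t) dt + 4√2 A₀² e^{-√2 T}| ≤ C e^{-2(1-κ)√2 T}. -/
/-!
With `u = √2 t`, `σ` the sigmoid and `q = σ (1 - σ)` the logistic density, one has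
`H = 2σ(u) - 1`, `H' = 2√2 q(u)` and `W''(H) - 2 = -12 q(u)`, so the integral is
`-48√2 ∫ q(u)² q(u - τ) du` with `τ = √2 T`. Replacing `q(u - τ)` by its tail `e^(u - τ)` gives
exactly `-48√2 e^(-τ) / 3 = -4√2 A₀² e^(-τ)`, since `σ³/3` is a primitive of `q² eᵘ`. The error
`0 ≤ eᵘ - q(u) = σ eᵘ (2 - σ)` is at most `2 e^(cu)` for every `c ∈ [1, 2]`, and
`q(u)² e^(cu) ≤ e^(-(2 - c)|u|)` is integrable for `c < 2`; so the remainder is `O(e^(-cτ))`,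
and `c = max 1 (2(1 - κ))` gives the claimed rate.
-/

open Real MeasureTheory Filter Topology

noncomputable def logisticDensity (u : ℝ) : ℝ := sigmoid u * (1 - sigmoid u)

lemma sigmoid_le_exp (u : ℝ) : sigmoid u ≤ exp u :=
  calc sigmoid u ≤ (exp (-u))⁻¹ := inv_anti₀ (exp_pos _) (by linarith [exp_pos (-u)])
    _ = exp u := by rw [exp_neg, inv_inv]

lemma one_sub_sigmoid_le_exp_neg (u : ℝ) : 1 - sigmoid u ≤ exp (-u) := by
  simpa [sigmoid_neg] using sigmoid_le_exp (-u)

lemma one_sub_sigmoid_mul_exp (u : ℝ) : (1 - sigmoid u) * exp u = sigmoid u := by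
  simpa [sigmoid_neg] using sigmoid_mul_rexp_neg (-u)

lemma sigmoid_mul_exp_le {c : ℝ} (hc1 : 1 ≤ c) (hc2 : c ≤ 2) (u : ℝ) :
    sigmoid u * exp u ≤ exp (c * u) := by
  rcases le_total 0 u with hu | hu
  · calc sigmoid u * exp u ≤ 1 * exp u := by gcongr; exact sigmoid_le_one u
      _ ≤ exp (c * u) := by rw [one_mul]; gcongr; nlinarith
  · calc sigmoid u * exp u ≤ exp u * exp u := by gcongr; exact sigmoid_le_exp u
      _ ≤ exp (c * u) := by rw [← exp_add]; gcongr; nlinarith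

lemma tanh_half_eq_two_mul_sigmoid_sub_one (u : ℝ) : tanh (u / 2) = 2 * sigmoid u - 1 := by
  have hsq : exp (-u) = exp (-(u / 2)) ^ 2 := by rw [← exp_nat_mul]; ring_nf
  have hmul : exp (u / 2) * exp (-(u / 2)) = 1 := by rw [← exp_add, add_neg_cancel, exp_zero]
  have := exp_pos (u / 2)
  have := exp_pos (-(u / 2))
  rw [tanh_eq, sigmoid_def, hsq]
  field_simp
  linear_combination 2 * exp (-(u / 2)) * hmul

lemma one_sub_tanh_half_sq (u : ℝ) : 1 - tanh (u / 2) ^ 2 = 4 * logisticDensity u := by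
  rw [tanh_half_eq_two_mul_sigmoid_sub_one, logisticDensity]; ring

lemma hasDerivAt_tanh_mul_div_two (s t : ℝ) :
    HasDerivAt (fun t => tanh (s * t / 2)) (2 * s * logisticDensity (s * t)) t := by
  simp_rw [tanh_half_eq_two_mul_sigmoid_sub_one]
  have := ((hasDerivAt_sigmoid (s * t)).comp t ((hasDerivAt_id t).const_mul s)).const_mul 2
  exact (this.sub_const 1).congr_deriv (by unfold logisticDensity; ring)

@[fun_prop]
lemma continuous_logisticDensity : Continuous logisticDensity := by
  unfold logisticDensity; fun_prop

lemma logisticDensity_pos (u : ℝ) : 0 < logisticDensity u :=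
  mul_pos (sigmoid_pos u) (by linarith [sigmoid_lt_one u])

lemma logisticDensity_le_exp_neg_abs (u : ℝ) : logisticDensity u ≤ exp (-|u|) := by
  have h₀ := sigmoid_pos u
  have h₁ := sigmoid_lt_one u
  unfold logisticDensity
  rcases le_total 0 u with hu | hu
  · rw [abs_of_nonneg hu]
    nlinarith [one_sub_sigmoid_le_exp_neg u]
  · rw [abs_of_nonpos hu, neg_neg]
    nlinarith [sigmoid_le_exp u]

lemma exp_sub_logisticDensity_eq (u : ℝ) :
    exp u - logisticDensity u = sigmoid u * exp u * (2 - sigmoid u) := by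
  unfold logisticDensity
  linear_combination (1 - sigmoid u) * one_sub_sigmoid_mul_exp u

lemma exp_sub_logisticDensity_nonneg (u : ℝ) : 0 ≤ exp u - logisticDensity u := by
  rw [exp_sub_logisticDensity_eq]
  exact mul_nonneg (mul_nonneg (sigmoid_nonneg u) (exp_pos u).le)
    (by linarith [sigmoid_le_one u])

lemma exp_sub_logisticDensity_le {c : ℝ} (hc1 : 1 ≤ c) (hc2 : c ≤ 2) (u : ℝ) :
    exp u - logisticDensity u ≤ 2 * exp (c * u) := by
  rw [exp_sub_logisticDensity_eq]
  have := sigmoid_mul_exp_le hc1 hc2 u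
  nlinarith [mul_nonneg (sq_nonneg (sigmoid u)) (exp_pos u).le]

lemma integral_exp_neg_mul_abs {b : ℝ} (hb : 0 < b) : ∫ u, exp (-(b * |u|)) = 2 / b := by
  rw [integral_comp_abs (f := fun u => exp (-(b * u)))]
  simp_rw [← neg_mul]
  rw [integral_exp_mul_Ioi (neg_lt_zero.2 hb)]
  field_simp
  simp

-- `integral_comp_abs` needs no integrability, so the nonzero value of the integral forces it.
lemma integrable_exp_neg_mul_abs {b : ℝ} (hb : 0 < b) : Integrable fun u => exp (-(b * |u|)) :=
  .of_integral_ne_zero (by rw [integral_exp_neg_mul_abs hb]; positivity)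

lemma logisticDensity_sq_mul_exp_le {c : ℝ} (hc0 : 0 ≤ c) (u : ℝ) :
    logisticDensity u ^ 2 * exp (c * u) ≤ exp (-((2 - c) * |u|)) := by
  have hq : logisticDensity u ^ 2 ≤ exp (-|u|) ^ 2 :=
    pow_le_pow_left₀ (logisticDensity_pos u).le (logisticDensity_le_exp_neg_abs u) 2
  calc logisticDensity u ^ 2 * exp (c * u) ≤ exp (-|u|) ^ 2 * exp (c * u) := by gcongr
    _ = exp (-(2 * |u|) + c * u) := by rw [← exp_nat_mul, ← exp_add]; ring_nf
    _ ≤ exp (-((2 - c) * |u|)) := by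
      gcongr
      nlinarith [le_abs_self u]

lemma integrable_logisticDensity_sq_mul_exp {c : ℝ} (hc0 : 0 ≤ c) (hc2 : c < 2) :
    Integrable fun u => logisticDensity u ^ 2 * exp (c * u) := by
  refine (integrable_exp_neg_mul_abs (sub_pos.2 hc2)).mono' (by fun_prop) (.of_forall fun u => ?_)
  rw [Real.norm_of_nonneg (by positivity)]
  exact logisticDensity_sq_mul_exp_le hc0 u

lemma hasDerivAt_sigmoid_pow_three_div_three (u : ℝ) :
    HasDerivAt (fun u => sigmoid u ^ 3 / 3) (logisticDensity u ^ 2 * exp u) u := by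
  refine (((hasDerivAt_sigmoid u).pow 3).div_const 3).congr_deriv ?_
  unfold logisticDensity
  linear_combination -(sigmoid u ^ 2 * (1 - sigmoid u)) * one_sub_sigmoid_mul_exp u

lemma integral_logisticDensity_sq_mul_exp : ∫ u, logisticDensity u ^ 2 * exp u = 1 / 3 := by
  have hint : Integrable fun u => logisticDensity u ^ 2 * exp u := by
    simpa using integrable_logisticDensity_sq_mul_exp zero_le_one one_lt_two
  have hbot : Tendsto (fun u => sigmoid u ^ 3 / 3) atBot (𝓝 (0 ^ 3 / 3)) :=
    (tendsto_sigmoid_atBot.pow 3).div_const 3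
  have htop : Tendsto (fun u => sigmoid u ^ 3 / 3) atTop (𝓝 (1 ^ 3 / 3)) :=
    (tendsto_sigmoid_atTop.pow 3).div_const 3
  rw [integral_of_hasDerivAt_of_tendsto hasDerivAt_sigmoid_pow_three_div_three hint hbot htop]
  norm_num

noncomputable def interactionIntegral (τ : ℝ) : ℝ :=
  ∫ u, logisticDensity u ^ 2 * logisticDensity (u - τ)

lemma abs_interactionIntegral_sub_le {c : ℝ} (hc1 : 1 ≤ c) (hc2 : c < 2) (τ : ℝ) :
    |interactionIntegral τ - exp (-τ) / 3| ≤ 4 / (2 - c) * exp (-(c * τ)) := by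
  have hc0 : 0 ≤ c := by linarith
  set f := fun u => logisticDensity u ^ 2 * exp (u - τ)
  set g := fun u => logisticDensity u ^ 2 * logisticDensity (u - τ)
  have hf_eq : f = fun u => logisticDensity u ^ 2 * exp u * exp (-τ) := by
    ext u; simp only [f, sub_eq_add_neg, exp_add, mul_assoc]
  have hf_int : Integrable f := by
    rw [hf_eq]
    simpa using (integrable_logisticDensity_sq_mul_exp zero_le_one one_lt_two).mul_const _
  have hf : ∫ u, f u = exp (-τ) / 3 := by
    rw [hf_eq, integral_mul_const, integral_logisticDensity_sq_mul_exp]; ring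
  have hgf : ∀ u, 0 ≤ f u - g u := fun u => by
    simpa [f, g, ← mul_sub] using
      mul_nonneg (sq_nonneg (logisticDensity u)) (exp_sub_logisticDensity_nonneg (u - τ))
  have hg_int : Integrable g := by
    refine hf_int.mono' (by fun_prop) (.of_forall fun u => ?_)
    rw [Real.norm_of_nonneg
      (mul_pos (pow_pos (logisticDensity_pos u) 2) (logisticDensity_pos _)).le]
    linarith [hgf u]
  have hfg_le : ∀ u, f u - g u ≤ 2 * exp (-(c * τ)) * (logisticDensity u ^ 2 * exp (c * u)) :=
    fun u => calc
      f u - g u = logisticDensity u ^ 2 * (exp (u - τ) - logisticDensity (u - τ)) := by ring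
      _ ≤ logisticDensity u ^ 2 * (2 * exp (c * (u - τ))) := by
        gcongr; exact exp_sub_logisticDensity_le hc1 hc2.le (u - τ)
      _ = _ := by rw [mul_sub, sub_eq_add_neg, exp_add]; ring
  calc |interactionIntegral τ - exp (-τ) / 3| = ∫ u, (f u - g u) := by
        rw [← hf, interactionIntegral]
        change |(∫ u, g u) - ∫ u, f u| = _
        rw [abs_sub_comm, ← integral_sub hf_int hg_int, abs_of_nonneg (integral_nonneg hgf)]
    _ ≤ ∫ u, 2 * exp (-(c * τ)) * (logisticDensity u ^ 2 * exp (c * u)) :=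
        integral_mono (hf_int.sub hg_int)
          ((integrable_logisticDensity_sq_mul_exp hc0 hc2).const_mul _) hfg_le
    _ ≤ ∫ u, 2 * exp (-(c * τ)) * exp (-((2 - c) * |u|)) := by
        refine integral_mono ((integrable_logisticDensity_sq_mul_exp hc0 hc2).const_mul _)
          ((integrable_exp_neg_mul_abs (sub_pos.2 hc2)).const_mul _) fun u => ?_
        gcongr
        exact logisticDensity_sq_mul_exp_le hc0 u
    _ = 4 / (2 - c) * exp (-(c * τ)) := by
        rw [integral_const_mul, integral_exp_neg_mul_abs (sub_pos.2 hc2)]; ring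

lemma integral_heteroclinic_interaction_eq {s : ℝ} (hs : 0 < s) {H : ℝ → ℝ}
    (hH : H = fun t => tanh (s * t / 2)) (T : ℝ) :
    ∫ t, ((3 * H t ^ 2 - 1) - 2) * deriv H (t - T) * deriv H t
      = -(48 * s) * interactionIntegral (s * T) := by
  have hderiv : ∀ t, deriv H t = 2 * s * logisticDensity (s * t) := fun t => by
    rw [hH]; exact (hasDerivAt_tanh_mul_div_two s t).deriv
  have hpot : ∀ t, (3 * H t ^ 2 - 1) - 2 = -12 * logisticDensity (s * t) := fun t => by
    have := one_sub_tanh_half_sq (s * t)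
    rw [hH]; linarith
  have hintegrand : ∀ t, ((3 * H t ^ 2 - 1) - 2) * deriv H (t - T) * deriv H t
      = -(48 * s ^ 2) * (logisticDensity (s * t) ^ 2 * logisticDensity (s * t - s * T)) :=
    fun t => by rw [hpot, hderiv, hderiv, mul_sub]; ring
  simp_rw [hintegrand]
  rw [Measure.integral_comp_mul_left
      (fun u => -(48 * s ^ 2) * (logisticDensity u ^ 2 * logisticDensity (u - s * T))),
    integral_const_mul, interactionIntegral, abs_of_pos (inv_pos.2 hs), smul_eq_mul]
  field_simp

/-- Interaction estimate for translated heteroclinics: with `H(t) = tanh(t/√2)`,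
`W''(s) = 3s² - 1` and `A₀ = 2`, for every `κ ∈ (0,1)` there is `C > 0` such that for all
`T ≥ 1`, `|∫ (W''(H(t)) - 2) H'(t-T) H'(t) dt + 4√2 A₀² e^{-√2 T}| ≤ C e^{-2(1-κ)√2 T}`. -/
theorem translated_heteroclinic_interaction
    (H : ℝ → ℝ) (hH : H = fun t => Real.tanh (t / Real.sqrt 2))
    (A₀ : ℝ) (hA₀ : A₀ = 2) :
    ∀ κ ∈ Set.Ioo (0 : ℝ) 1, ∃ C > (0 : ℝ), ∀ T : ℝ, 1 ≤ T →
      |(∫ t : ℝ, ((3 * (H t) ^ 2 - 1) - 2) * deriv H (t - T) * deriv H t)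
          + 4 * Real.sqrt 2 * A₀ ^ 2 * Real.exp (-(Real.sqrt 2) * T)|
        ≤ C * Real.exp (-(2 * (1 - κ) * Real.sqrt 2) * T) := by
  rintro κ ⟨hκ0, -⟩
  set s := √2
  have hs : 0 < s := by positivity
  have hH' : H = fun t => tanh (s * t / 2) := by
    rw [hH]; ext t; congr 1; field_simp; simp [s]
  set c := max 1 (2 * (1 - κ))
  have hc2 : c < 2 := max_lt one_lt_two (by linarith)
  refine ⟨48 * s * (4 / (2 - c)), by have := sub_pos.2 hc2; positivity, fun T hT => ?_⟩
  have hdecay : exp (-(c * (s * T))) ≤ exp (-(2 * (1 - κ) * s) * T) := by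
    have hsT : 0 ≤ s * T := mul_nonneg hs.le (by linarith)
    gcongr
    nlinarith [mul_le_mul_of_nonneg_right (le_max_right 1 (2 * (1 - κ))) hsT]
  rw [integral_heteroclinic_interaction_eq hs hH' T, hA₀]
  calc _ = |-(48 * s * (interactionIntegral (s * T) - exp (-(s * T)) / 3))| := by
        rw [neg_mul s T]; congr 1; ring
    _ = 48 * s * |interactionIntegral (s * T) - exp (-(s * T)) / 3| := by
        rw [abs_neg, abs_mul, abs_of_pos (by positivity)]
    _ ≤ 48 * s * (4 / (2 - c) * exp (-(c * (s * T)))) := by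
        gcongr; exact abs_interactionIntegral_sub_le (le_max_left _ _) hc2 (s * T)
    _ ≤ _ := by rw [← mul_assoc]; gcongr
end

section
/- Let H(t)=tanh(t/√2), W''(s)=3s²-1, and let J be the bounded odd solution of J'' = W''(H)J + tH' with J(0)=0. Then ∫_{-∞}^{∞} W'''(H(t)) J(t) H'(t)² dt = -(1/2) ∫_{-∞}^{∞} H'(t)² dt, i.e. it equals -h₀/2 where h₀ = ∫ H'². -/
/-!
Write `u = H'`, so that `H'' = H³ - H` and `u'' = (3H² - 1) u`. Differentiating the Jacobi
equation gives `J''' = 6 H u J + (3H² - 1) J' + u + t u'`, and then the flux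
`J'' u - J' u' - t u² / 2` has derivative exactly `6 H J u² + u² / 2`. The flux vanishes at `±∞`:
`J` and hence `J''` are bounded, `J'` grows at most linearly, while `u`, `u'` and `t u` decay.
Integrating over `ℝ` gives the identity.
-/

open Real MeasureTheory Filter Topology

namespace Real

theorem one_sub_tanh_sq (x : ℝ) : 1 - tanh x ^ 2 = (cosh x ^ 2)⁻¹ := by
  have := (cosh_pos x).ne'
  rw [tanh_eq_sinh_div_cosh, div_pow, sinh_sq]
  field_simp
  ring

theorem hasDerivAt_tanh (x : ℝ) : HasDerivAt tanh (1 - tanh x ^ 2) x := by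
  have h := (hasDerivAt_sinh x).div (hasDerivAt_cosh x) (cosh_pos x).ne'
  rw [one_sub_tanh_sq, show tanh = sinh / cosh from funext tanh_eq_sinh_div_cosh]
  refine h.congr_deriv ?_
  rw [← sq, ← sq, cosh_sq_sub_sinh_sq, one_div]

theorem abs_le_cosh (x : ℝ) : |x| ≤ cosh x := by
  rw [← cosh_abs]
  exact (self_le_sinh_iff.2 (abs_nonneg x)).trans (sinh_lt_cosh _).le

theorem inv_cosh_le_one (x : ℝ) : (cosh x)⁻¹ ≤ 1 := inv_le_one_of_one_le₀ (one_le_cosh x)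

theorem abs_mul_inv_cosh_sq_le (x : ℝ) : |x| * (cosh x ^ 2)⁻¹ ≤ (cosh x)⁻¹ := by
  have := cosh_pos x
  rw [sq, mul_inv, ← mul_assoc]
  exact mul_le_of_le_one_left (by positivity) ((div_le_one this).2 (abs_le_cosh x))

theorem integrable_inv_cosh_sq : Integrable fun x => (cosh x ^ 2)⁻¹ := by
  refine integrable_inv_one_add_sq.mono' (by fun_prop) (ae_of_all _ fun x => ?_)
  have hx : x ^ 2 ≤ sinh x ^ 2 := by
    rw [← sq_abs, ← sq_abs (sinh x), abs_sinh]
    exact pow_le_pow_left₀ (abs_nonneg x) (self_le_sinh_iff.2 (abs_nonneg x)) 2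
  rw [norm_inv, norm_pow, norm_of_nonneg (cosh_pos x).le, cosh_sq']
  gcongr

theorem tendsto_inv_cosh_div_cocompact {c : ℝ} (hc : 0 < c) :
    Tendsto (fun x => (cosh (x / c))⁻¹) (cocompact ℝ) (𝓝 0) := by
  refine Tendsto.inv_tendsto_atTop (tendsto_atTop_mono (fun x => ?_)
    ((tendsto_norm_cocompact_atTop (E := ℝ)).atTop_div_const hc))
  rw [norm_eq_abs, ← abs_of_pos hc, ← abs_div, abs_of_pos hc]
  exact abs_le_cosh _

end Real

theorem tendsto_mul_zero_of_hasDerivAt_of_abs_le {f f' w : ℝ → ℝ} {l : Filter ℝ} {C : ℝ}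
    (hf : ∀ t, HasDerivAt f (f' t) t) (hf' : ∀ t, |f' t| ≤ C)
    (hw : Tendsto w l (𝓝 0)) (htw : Tendsto (fun t => t * w t) l (𝓝 0)) :
    Tendsto (fun t => f t * w t) l (𝓝 0) := by
  have hgrowth (t : ℝ) : |f t| ≤ |f 0| + C * |t| := by
    have h := convex_univ.norm_image_sub_le_of_norm_hasDerivWithin_le
      (fun x _ => (hf x).hasDerivWithinAt) (fun x _ => hf' x) (Set.mem_univ 0) (Set.mem_univ t)
    rw [norm_eq_abs, norm_eq_abs, sub_zero] at h
    linarith [abs_sub_abs_le_abs_sub (f t) (f 0)]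
  have hlim := (hw.abs.const_mul |f 0|).add (htw.abs.const_mul C)
  rw [abs_zero, mul_zero, mul_zero, add_zero] at hlim
  refine squeeze_zero_norm (fun t => ?_) hlim
  rw [norm_eq_abs, abs_mul, abs_mul t]
  nlinarith [hgrowth t, abs_nonneg (w t)]

section JacobiFlux

variable {H u J J' : ℝ → ℝ}

/-- `J'' H' - J' H'' - t H'² / 2`, written with `H' = u`, `H'' = H³ - H` and with `J''` given by
the Jacobi equation. -/
noncomputable def jacobiFlux (H u J J' : ℝ → ℝ) (t : ℝ) : ℝ :=
  ((3 * H t ^ 2 - 1) * J t + t * u t) * u t - J' t * (H t ^ 3 - H t) - t * u t ^ 2 / 2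

theorem hasDerivAt_jacobiFlux {t : ℝ} (hH : HasDerivAt H (u t) t)
    (hu : HasDerivAt u (H t ^ 3 - H t) t) (hJ : HasDerivAt J (J' t) t)
    (hJ' : HasDerivAt J' ((3 * H t ^ 2 - 1) * J t + t * u t) t) :
    HasDerivAt (jacobiFlux H u J J') (6 * H t * J t * u t ^ 2 + u t ^ 2 / 2) t := by
  have h := (((((hH.pow 2).const_mul 3).sub_const 1).mul hJ).add ((hasDerivAt_id t).mul hu)).mul hu
    |>.sub (hJ'.mul ((hH.pow 3).sub hH)) |>.sub (((hasDerivAt_id t).mul (hu.pow 2)).div_const 2)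
  refine h.congr_deriv ?_
  simp only [Pi.mul_apply, Pi.add_apply, Pi.sub_apply, Pi.pow_apply, id]
  ring

theorem tendsto_jacobiFlux {l : Filter ℝ} {M B K : ℝ} (hH : ∀ t, |H t| ≤ 1)
    (hJ : ∀ t, |J t| ≤ M) (hJ' : ∀ t, HasDerivAt J' ((3 * H t ^ 2 - 1) * J t + t * u t) t)
    (htu_le : ∀ t, |t * u t| ≤ B) (hHu : ∀ t, |H t ^ 3 - H t| ≤ K * |u t|)
    (hu : Tendsto u l (𝓝 0)) (htu : Tendsto (fun t => t * u t) l (𝓝 0)) :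
    Tendsto (jacobiFlux H u J J') l (𝓝 0) := by
  have hcoef (t : ℝ) : |(3 * H t ^ 2 - 1) * J t| ≤ 2 * M := by
    have h1 : |3 * H t ^ 2 - 1| ≤ 2 := by
      have := sq_le_one_iff_abs_le_one (H t) |>.2 (hH t)
      rw [abs_le]; constructor <;> nlinarith [sq_nonneg (H t)]
    rw [abs_mul]
    exact mul_le_mul h1 (hJ t) (abs_nonneg _) zero_le_two
  have hfirst : Tendsto (fun t => (3 * H t ^ 2 - 1) * J t * u t) l (𝓝 0) :=
    isBoundedUnder_le_mul_tendsto_zero (isBoundedUnder_of ⟨2 * M, hcoef⟩) hu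
  have hsecond : Tendsto (fun t => t * u t * u t / 2) l (𝓝 0) := by
    simpa using (htu.mul hu).div_const 2
  have hJ'u := tendsto_mul_zero_of_hasDerivAt_of_abs_le hJ'
    (fun t => (abs_add_le _ _).trans (add_le_add (hcoef t) (htu_le t))) hu htu
  have hthird : Tendsto (fun t => J' t * (H t ^ 3 - H t)) l (𝓝 0) := by
    refine squeeze_zero_norm (fun t => ?_) (by simpa using hJ'u.abs.const_mul K)
    rw [norm_eq_abs, abs_mul, mul_left_comm]
    exact mul_le_mul_of_nonneg_left (hHu t) (abs_nonneg _)
  have hsum := (hfirst.add hsecond).sub hthird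
  rw [add_zero, sub_zero] at hsum
  exact hsum.congr fun t => by rw [jacobiFlux]; ring

end JacobiFlux

noncomputable def kink (t : ℝ) : ℝ := tanh (t / √2)

noncomputable def kinkSlope (t : ℝ) : ℝ := (1 - kink t ^ 2) / √2

theorem abs_kink_le_one (t : ℝ) : |kink t| ≤ 1 := (abs_tanh_lt_one _).le

theorem kinkSlope_eq (t : ℝ) : kinkSlope t = (cosh (t / √2) ^ 2)⁻¹ / √2 := by
  rw [kinkSlope, kink, one_sub_tanh_sq]

theorem hasDerivAt_kink (t : ℝ) : HasDerivAt kink (kinkSlope t) t := by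
  have h := (hasDerivAt_tanh (t / √2)).comp t ((hasDerivAt_id t).div_const √2)
  exact h.congr_deriv (by rw [kinkSlope, kink]; ring)

theorem hasDerivAt_kinkSlope (t : ℝ) : HasDerivAt kinkSlope (kink t ^ 3 - kink t) t := by
  have h := (((hasDerivAt_kink t).pow 2).const_sub 1).div_const √2
  refine h.congr_deriv ?_
  have h2 : √2 ^ 2 = 2 := sq_sqrt zero_le_two
  rw [kinkSlope]
  field_simp
  linear_combination (kink t - kink t ^ 3) * h2

theorem continuous_kink : Continuous kink :=
  continuous_iff_continuousAt.2 fun t => (hasDerivAt_kink t).continuousAt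

theorem continuous_kinkSlope : Continuous kinkSlope :=
  continuous_iff_continuousAt.2 fun t => (hasDerivAt_kinkSlope t).continuousAt

theorem kinkSlope_nonneg (t : ℝ) : 0 ≤ kinkSlope t := by
  rw [kinkSlope_eq]; positivity

theorem kinkSlope_le_inv_cosh (t : ℝ) : kinkSlope t ≤ (cosh (t / √2))⁻¹ := by
  rw [kinkSlope_eq]
  calc (cosh (t / √2) ^ 2)⁻¹ / √2 ≤ (cosh (t / √2) ^ 2)⁻¹ / 1 := by
        gcongr; exact one_le_sqrt.2 one_le_two
    _ ≤ (cosh (t / √2))⁻¹ := by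
        rw [div_one]; gcongr; exact le_self_pow₀ (one_le_cosh _) two_ne_zero

theorem abs_mul_kinkSlope_le_inv_cosh (t : ℝ) : |t * kinkSlope t| ≤ (cosh (t / √2))⁻¹ := by
  have h : t * kinkSlope t = t / √2 * (cosh (t / √2) ^ 2)⁻¹ := by rw [kinkSlope_eq]; ring
  rw [h, abs_mul, abs_of_nonneg (by positivity : 0 ≤ (cosh (t / √2) ^ 2)⁻¹)]
  exact abs_mul_inv_cosh_sq_le _

theorem abs_kink_cube_sub_kink_le (t : ℝ) : |kink t ^ 3 - kink t| ≤ √2 * |kinkSlope t| := by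
  have h : kink t ^ 3 - kink t = -(√2 * kink t * kinkSlope t) := by
    rw [kinkSlope]; field_simp; ring
  rw [h, abs_neg, abs_mul, abs_mul, abs_of_pos (by positivity : (0 : ℝ) < √2), mul_assoc]
  gcongr
  exact mul_le_of_le_one_left (abs_nonneg _) (abs_kink_le_one t)

theorem integrable_kinkSlope : Integrable kinkSlope := by
  simp_rw [funext kinkSlope_eq]
  exact (integrable_inv_cosh_sq.comp_div (by positivity)).div_const _

theorem integrable_kinkSlope_sq : Integrable fun t => kinkSlope t ^ 2 := by
  simp_rw [sq]
  refine integrable_kinkSlope.bdd_mul (c := 1) continuous_kinkSlope.aestronglyMeasurable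
    (ae_of_all _ fun t => ?_)
  rw [norm_eq_abs, abs_of_nonneg (kinkSlope_nonneg t)]
  exact (kinkSlope_le_inv_cosh t).trans (inv_cosh_le_one _)

theorem tendsto_kinkSlope_cocompact : Tendsto kinkSlope (cocompact ℝ) (𝓝 0) :=
  squeeze_zero kinkSlope_nonneg kinkSlope_le_inv_cosh
    (tendsto_inv_cosh_div_cocompact (by positivity))

theorem tendsto_mul_kinkSlope_cocompact :
    Tendsto (fun t => t * kinkSlope t) (cocompact ℝ) (𝓝 0) :=
  squeeze_zero_norm abs_mul_kinkSlope_le_inv_cosh (tendsto_inv_cosh_div_cocompact (by positivity))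

theorem jacobi_cubic_identity_general
    (H : ℝ → ℝ) (hH : H = fun t => Real.tanh (t / Real.sqrt 2))
    (J : ℝ → ℝ)
    (hJsmooth : ContDiff ℝ 2 J)
    (hJbdd : ∃ M : ℝ, ∀ t, |J t| ≤ M)
    (hJode : ∀ t : ℝ, deriv (deriv J) t = (3 * (H t) ^ 2 - 1) * J t + t * deriv H t) :
    (∫ t : ℝ, 6 * H t * J t * (deriv H t) ^ 2) = -(1 / 2) * ∫ t : ℝ, (deriv H t) ^ 2 := by
  obtain ⟨M, hM⟩ := hJbdd
  obtain rfl : H = kink := hH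
  rw [show deriv kink = kinkSlope from funext fun t => (hasDerivAt_kink t).deriv] at hJode ⊢
  have hJ (t : ℝ) : HasDerivAt J (deriv J t) t :=
    (hJsmooth.differentiable two_ne_zero t).hasDerivAt
  have hJ' (t : ℝ) : HasDerivAt (deriv J) ((3 * kink t ^ 2 - 1) * J t + t * kinkSlope t) t :=
    hJode t ▸ (hJsmooth.differentiable_deriv_two t).hasDerivAt
  have hint₁ : Integrable fun t => 6 * kink t * J t * kinkSlope t ^ 2 := by
    refine integrable_kinkSlope_sq.bdd_mul (c := 6 * M)
      ((continuous_const.mul continuous_kink).mul hJsmooth.continuous).aestronglyMeasurable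
      (ae_of_all _ fun t => ?_)
    rw [norm_eq_abs, abs_mul, abs_mul, abs_of_pos (by norm_num : (0 : ℝ) < 6), mul_assoc]
    gcongr
    exact (mul_le_of_le_one_left (abs_nonneg _) (abs_kink_le_one t)).trans (hM t)
  have hint₂ := integrable_kinkSlope_sq.div_const 2
  have hflux := tendsto_jacobiFlux abs_kink_le_one hM hJ'
    (fun t => (abs_mul_kinkSlope_le_inv_cosh t).trans (inv_cosh_le_one _))
    abs_kink_cube_sub_kink_le tendsto_kinkSlope_cocompact tendsto_mul_kinkSlope_cocompact
  have hzero := integral_of_hasDerivAt_of_tendsto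
    (fun t => hasDerivAt_jacobiFlux (hasDerivAt_kink t) (hasDerivAt_kinkSlope t) (hJ t) (hJ' t))
    (hint₁.add hint₂) (hflux.mono_left atBot_le_cocompact) (hflux.mono_left atTop_le_cocompact)
  rw [integral_add hint₁ hint₂, integral_div] at hzero
  linarith

/-- With `H(t) = tanh(t/√2)`, `W''(s) = 3s² - 1`, `W'''(s) = 6s`, and `J` the bounded odd
solution of `J'' = W''(H)J + tH'` with `J(0)=0`, one has
`∫ W'''(H(t)) J(t) H'(t)² dt = -(1/2) ∫ H'(t)² dt = -h₀/2`. -/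
theorem jacobi_cubic_identity
    (H : ℝ → ℝ) (hH : H = fun t => Real.tanh (t / Real.sqrt 2))
    (J : ℝ → ℝ)
    (hJsmooth : ContDiff ℝ 2 J)
    (hJbdd : ∃ M : ℝ, ∀ t, |J t| ≤ M)
    (hJodd : ∀ t : ℝ, J (-t) = -J t)
    (hJ0 : J 0 = 0)
    (hJode : ∀ t : ℝ, deriv (deriv J) t = (3 * (H t) ^ 2 - 1) * J t + t * deriv H t) :
    (∫ t : ℝ, 6 * H t * J t * (deriv H t) ^ 2) = -(1 / 2) * ∫ t : ℝ, (deriv H t) ^ 2 :=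
  jacobi_cubic_identity_general H hH J hJsmooth hJbdd hJode
end
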